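/- There exists a constant B > 0 (depending only on n, λ and σ_a) such that for every initial state α = (α_1,…,α_n,l) ∈ 𝒜: E_α[ Σ_{i=1}^n Q_i(τ_0)² ] ≤ B · (max(max_{1≤i≤n} α_i, 1))². In particular, E_α[L(X(τ_0))] = E_α[Σ_{i=1}^n Q_i(τ_0)^{1+γ}] is finite for every γ ∈ (0,1]. -/

import Mathlib

/-!
Almost surely every service is at least one, and a uniform choice among a single idle server
picks that server. Hence, while no `Ω_t` occurs, the Last-Idle server stays fixed from slot 1
on, and any other server, receiving no work, loses at least one job per slot; so
`τ_0 ≤ M := max (max_i α_i) 1`. Up to then each queue grows by at most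
`S = a(1) + ⋯ + a(M)`, and by Cauchy–Schwarz
`∑ i, Q_i(τ_0)² ≤ n (M + S)² ≤ 2n (M² + M ∑ a(r)²)`, whose expectation is at most
`2n (1 + λ² + σ_a²) M²`. The `(1+γ)`-th powers are dominated by the squares.
-/

open MeasureTheory ENNReal Filter ProbabilityTheory

namespace PI

/-- The state space of the PI chain: queue lengths and identity of the Last-Idle server. -/
abbrev State (n : ℕ) := (Fin n → ℕ) × Fin n

/-- The set of idle servers for the queue-length vector `q`. -/
def idleSet {n : ℕ} (q : Fin n → ℕ) : Finset (Fin n) := Finset.univ.filter (fun i => q i = 0)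

/-- One step of the PI dynamics: given the current state `x`, the incoming batch size `batch`,
the service capacities `svc` and the uniform tie-breaking noise `u` (converted into a uniform
choice among the idle servers by `choice`).  The new Last-Idle server is chosen uniformly among
the currently idle servers if there are any (otherwise it is unchanged), the whole batch joins
its queue, and then every server serves up to its capacity (`ℕ`-subtraction is truncated,
realizing the positive part `[·]⁺`). -/
def step {n : ℕ} (choice : Finset (Fin n) → ℝ → Fin n)
    (x : State n) (batch : ℕ) (svc : Fin n → ℕ) (u : ℝ) : State n :=
  let l := if (idleSet x.1).Nonempty then choice (idleSet x.1) u else x.2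
  (fun i => x.1 i + (if l = i then batch else 0) - svc i, l)

/-- The PI trajectory `X = (Q, LI)` started from `α`; the step from time `t` to `t+1`
(i.e. time slot `t+1`) uses the noise of index `t`. -/
def traj {n : ℕ} {Ω : Type} (choice : Finset (Fin n) → ℝ → Fin n)
    (a : ℕ → Ω → ℕ) (s : Fin n → ℕ → Ω → ℕ) (U : ℕ → Ω → ℝ)
    (α : State n) : ℕ → Ω → State n
  | 0 => fun _ => α
  | (t+1) => fun ω => step choice (traj choice a s U α t ω) (a t ω) (fun i => s i t ω) (U t ω)

/-- Index type for the driving noise: arrivals, services, tie-breaking uniforms. -/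
def NoiseIdx (n : ℕ) := (ℕ ⊕ (Fin n × ℕ)) ⊕ ℕ

/-- Value type of each noise coordinate. -/
def NoiseType {n : ℕ} : NoiseIdx n → Type
  | .inl (.inl _) => ℕ
  | .inl (.inr _) => ℕ
  | .inr _ => ℝ

instance {n : ℕ} : ∀ k : NoiseIdx n, MeasurableSpace (NoiseType k)
  | .inl (.inl _) => inferInstanceAs (MeasurableSpace ℕ)
  | .inl (.inr _) => inferInstanceAs (MeasurableSpace ℕ)
  | .inr _ => inferInstanceAs (MeasurableSpace ℝ)

/-- The combined noise family (arrivals, services, tie-breaking uniforms). -/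
def noise {n : ℕ} {Ω : Type} (a : ℕ → Ω → ℕ) (s : Fin n → ℕ → Ω → ℕ)
    (U : ℕ → Ω → ℝ) : ∀ k : NoiseIdx n, Ω → NoiseType k
  | .inl (.inl t) => a t
  | .inl (.inr p) => s p.1 p.2
  | .inr t => U t

/-- The empty state with Last-Idle server `i`. -/
def emptyState {n : ℕ} (i : Fin n) : State n := (fun _ => 0, i)

/-- First time `t ≥ 1` at which the process `X` lies in `B` (with value `∞ ∈ ℝ≥0∞`
if this never happens). -/
noncomputable def hitTime {n : ℕ} {Ω : Type} (X : ℕ → Ω → State n)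
    (B : Set (State n)) (ω : Ω) : ℝ≥0∞ :=
  sInf {x : ℝ≥0∞ | ∃ t : ℕ, 1 ≤ t ∧ X t ω ∈ B ∧ x = (t : ℝ≥0∞)}

/-- The event `Ω_t`: some server other than the Last-Idle server is idle. -/
def boundaryEvt {n : ℕ} (x : State n) : Prop := ∃ i, i ≠ x.2 ∧ x.1 i = 0

/-- The sampling times `τ_k`: the successive (random) times `t ≥ 1` at which `Ω_t` occurs. -/
noncomputable def sampleTime {n : ℕ} {Ω : Type} (X : ℕ → Ω → State n) : ℕ → Ω → ℕ
  | 0 => fun ω => sInf {t | 1 ≤ t ∧ boundaryEvt (X t ω)}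
  | (k+1) => fun ω => sInf {t | sampleTime X k ω < t ∧ boundaryEvt (X t ω)}

/-- The sampled chain `Y_k = X (τ_k)`. -/
noncomputable def sampled {n : ℕ} {Ω : Type} (X : ℕ → Ω → State n) (k : ℕ) (ω : Ω) : State n :=
  X (sampleTime X k ω) ω

/-- The tie-breaking variable `ξ_t`, `t ≥ 1`: the uniform choice among the servers idle at
time `t − 1` (which is the new Last-Idle server when some server is idle at `t − 1`). -/
def xi {n : ℕ} {Ω : Type} (choice : Finset (Fin n) → ℝ → Fin n) (U : ℕ → Ω → ℝ)
    (X : ℕ → Ω → State n) (t : ℕ) (ω : Ω) : Fin n :=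
  choice (idleSet ((X (t - 1) ω).1)) (U (t - 1) ω)

/-- The σ-algebra `ℱ^ξ_t = σ(X 0, …, X t, ξ 1, …, ξ (t+1))`. -/
noncomputable def filtXi {n : ℕ} {Ω : Type} (choice : Finset (Fin n) → ℝ → Fin n)
    (U : ℕ → Ω → ℝ) (X : ℕ → Ω → State n) (t : ℕ) : MeasurableSpace Ω :=
  (⨆ r ∈ Set.Iic t, MeasurableSpace.comap (X r) ⊤) ⊔
    (⨆ r ∈ Set.Iic t, MeasurableSpace.comap (xi choice U X (r + 1)) ⊤)

/-- The Lyapunov function `L α = ∑ i, (α i) ^ (1 + γ)` (valued in `ℝ≥0∞`). -/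
noncomputable def lyap {n : ℕ} (γ : ℝ) (x : State n) : ℝ≥0∞ :=
  ∑ i, (x.1 i : ℝ≥0∞) ^ ((1 : ℝ) + γ)

/-- `σ = inf {k ≥ 0 : Y_k ∈ A}`, the first sampling index at which the sampled chain is in
`A` (`∞ ∈ ℕ∞` if there is none). -/
noncomputable def hitIdx {n : ℕ} {Ω : Type} (X : ℕ → Ω → State n)
    (A : Set (State n)) (ω : Ω) : ℕ∞ :=
  sInf {k : ℕ∞ | ∃ m : ℕ, k = (m : ℕ∞) ∧ sampled X m ω ∈ A}

end PI

namespace PI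

section Pathwise

variable {n : ℕ} {Ω : Type} (choice : Finset (Fin n) → ℝ → Fin n)

theorem step_fst_le_add (x : State n) (b : ℕ) (svc : Fin n → ℕ) (u : ℝ) (i : Fin n) :
    (step choice x b svc u).1 i ≤ x.1 i + b := by
  refine (Nat.sub_le _ _).trans (Nat.add_le_add_left ?_ _)
  split_ifs <;> simp

theorem step_fst_of_snd_ne {x : State n} {b : ℕ} {svc : Fin n → ℕ} {u : ℝ} {i : Fin n}
    (hi : (step choice x b svc u).2 ≠ i) : (step choice x b svc u).1 i = x.1 i - svc i := by
  simp only [step] at hi ⊢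
  rw [if_neg hi, Nat.add_zero]

theorem step_snd_of_not_boundaryEvt {x : State n} (b : ℕ) (svc : Fin n → ℕ) {u : ℝ}
    (hx : ¬ boundaryEvt x) (hu : choice {x.2} u = x.2) : (step choice x b svc u).2 = x.2 := by
  have hidle : idleSet x.1 ⊆ {x.2} := fun i hi => by
    by_contra hne
    exact hx ⟨i, Finset.notMem_singleton.mp hne, (Finset.mem_filter.mp hi).2⟩
  simp only [step]
  split_ifs with hne
  · rwa [(Finset.subset_singleton_iff.mp hidle).resolve_left hne.ne_empty]
  · rfl

variable (a : ℕ → Ω → ℕ) (s : Fin n → ℕ → Ω → ℕ) (U : ℕ → Ω → ℝ) (α : State n) (ω : Ω)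

theorem traj_fst_le_add_sum (t : ℕ) (i : Fin n) :
    (traj choice a s U α t ω).1 i ≤ α.1 i + ∑ r ∈ Finset.range t, a r ω := by
  induction t with
  | zero => simp [traj]
  | succ t ih =>
    rw [Finset.sum_range_succ, ← Nat.add_assoc]
    exact (step_fst_le_add choice _ _ _ _ i).trans (Nat.add_le_add_right ih _)

variable {choice a s U α ω}

theorem traj_snd_eq_of_not_boundaryEvt (hchoice : ∀ t j, choice {j} (U t ω) = j) {T : ℕ}
    (hT : ∀ t, 1 ≤ t → t < T → ¬ boundaryEvt (traj choice a s U α t ω)) :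
    ∀ t, 1 ≤ t → t ≤ T → (traj choice a s U α t ω).2 = (traj choice a s U α 1 ω).2 := by
  intro t ht
  induction t, ht using Nat.le_induction with
  | base => exact fun _ => rfl
  | succ t ht ih =>
    intro htT
    rw [← ih (by omega)]
    exact step_snd_of_not_boundaryEvt choice _ _ (hT t ht (by omega)) (hchoice t _)

theorem traj_fst_le_sub_of_snd_ne (hsvc : ∀ t i, 1 ≤ s i t ω) {T : ℕ} {j : Fin n}
    (hj : ∀ t, 1 ≤ t → t ≤ T → (traj choice a s U α t ω).2 ≠ j) :
    ∀ t ≤ T, (traj choice a s U α t ω).1 j ≤ α.1 j - t := by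
  intro t
  induction t with
  | zero => exact fun _ => le_rfl
  | succ t ih =>
    intro htT
    rw [traj, step_fst_of_snd_ne choice (hj (t + 1) (by omega) htT)]
    have := ih (by omega)
    have := hsvc t j
    omega

theorem exists_boundaryEvt_traj (hn : 2 ≤ n) (hsvc : ∀ t i, 1 ≤ s i t ω)
    (hchoice : ∀ t j, choice {j} (U t ω) = j) {M : ℕ} (hM : 1 ≤ M) (hαM : ∀ i, α.1 i ≤ M) :
    ∃ t, 1 ≤ t ∧ t ≤ M ∧ boundaryEvt (traj choice a s U α t ω) := by
  by_contra! hnone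
  have : Nontrivial (Fin n) := Fin.nontrivial_iff_two_le.mpr hn
  obtain ⟨j, hj⟩ := exists_ne (traj choice a s U α 1 ω).2
  have hsnd := traj_snd_eq_of_not_boundaryEvt hchoice (T := M)
    fun t ht htM => hnone t ht htM.le
  have hempty : (traj choice a s U α M ω).1 j = 0 := by
    have := traj_fst_le_sub_of_snd_ne hsvc
      (fun t ht htM => (hsnd t ht htM).trans_ne hj.symm) M le_rfl
    have := hαM j
    omega
  exact hnone M hM le_rfl ⟨j, ((hsnd M hM le_rfl).trans_ne hj.symm).symm, hempty⟩

theorem sampleTime_zero_traj_le (hn : 2 ≤ n) (hsvc : ∀ t i, 1 ≤ s i t ω)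
    (hchoice : ∀ t j, choice {j} (U t ω) = j) {M : ℕ} (hM : 1 ≤ M) (hαM : ∀ i, α.1 i ≤ M) :
    sampleTime (traj choice a s U α) 0 ω ≤ M := by
  obtain ⟨t, ht, htM, hbd⟩ := exists_boundaryEvt_traj (a := a) hn hsvc hchoice hM hαM
  exact le_trans (Nat.sInf_le (show t ∈ {t | 1 ≤ t ∧ _} from ⟨ht, hbd⟩)) htM

theorem sum_sq_traj_sampleTime_le (hn : 2 ≤ n) (hsvc : ∀ t i, 1 ≤ s i t ω)
    (hchoice : ∀ t j, choice {j} (U t ω) = j) {M : ℕ} (hM : 1 ≤ M) (hαM : ∀ i, α.1 i ≤ M) :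
    ∑ i, ((traj choice a s U α (sampleTime (traj choice a s U α) 0 ω) ω).1 i) ^ 2
      ≤ 2 * n * (M ^ 2 + M * ∑ r ∈ Finset.range M, a r ω ^ 2) := by
  set S := ∑ r ∈ Finset.range M, a r ω
  have hτ := sampleTime_zero_traj_le (a := a) hn hsvc hchoice hM hαM
  have hQ : ∀ i, (traj choice a s U α (sampleTime (traj choice a s U α) 0 ω) ω).1 i ≤ M + S :=
    fun i => (traj_fst_le_add_sum choice a s U α ω _ i).trans <| Nat.add_le_add (hαM i) <|
      Finset.sum_le_sum_of_subset (Finset.range_subset_range.mpr hτ)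
  have hS : S ^ 2 ≤ M * ∑ r ∈ Finset.range M, a r ω ^ 2 := by
    simpa using sq_sum_le_card_mul_sum_sq (s := Finset.range M) (f := fun r => a r ω)
  calc _ ≤ ∑ _i : Fin n, (M + S) ^ 2 := Finset.sum_le_sum fun i _ => Nat.pow_le_pow_left (hQ i) 2
    _ = n * (M + S) ^ 2 := by simp
    _ ≤ n * (2 * (M ^ 2 + S ^ 2)) := Nat.mul_le_mul_left _ add_sq_le
    _ ≤ 2 * n * (M ^ 2 + M * ∑ r ∈ Finset.range M, a r ω ^ 2) := by
      rw [← Nat.mul_assoc, Nat.mul_comm n 2]; gcongr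

end Pathwise

theorem lyap_le_sum_sq {n : ℕ} {γ : ℝ} (hγ₀ : 0 < 1 + γ) (hγ₁ : γ ≤ 1) (x : State n) :
    lyap γ x ≤ ∑ i, (x.1 i : ℝ≥0∞) ^ 2 := by
  refine Finset.sum_le_sum fun i _ => ?_
  rcases Nat.eq_zero_or_pos (x.1 i) with h | h
  · simp [h, ENNReal.zero_rpow_of_pos hγ₀]
  · calc (x.1 i : ℝ≥0∞) ^ ((1 : ℝ) + γ) ≤ (x.1 i : ℝ≥0∞) ^ ((2 : ℕ) : ℝ) :=
          ENNReal.rpow_le_rpow_of_exponent_le (by exact_mod_cast h) (by push_cast; linarith)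
      _ = (x.1 i : ℝ≥0∞) ^ 2 := ENNReal.rpow_natCast _ 2

section Probabilistic

variable {n : ℕ} {Ω : Type} [MeasurableSpace Ω] {P : Measure Ω}

theorem ae_one_le_service {s : Fin n → ℕ → Ω → ℕ} {νs : Fin n → Measure ℕ} {smax : ℕ}
    (hs_meas : ∀ i t, Measurable (s i t)) (hs_law : ∀ i t, Measure.map (s i t) P = νs i)
    (hs_bdd : ∀ i, (νs i) {k : ℕ | ¬(1 ≤ k ∧ k ≤ smax)} = 0) :
    ∀ᵐ ω ∂P, ∀ t i, 1 ≤ s i t ω := by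
  refine ae_all_iff.mpr fun t => ae_all_iff.mpr fun i => ?_
  have hbdd : ∀ᵐ k ∂(Measure.map (s i t) P), 1 ≤ k ∧ k ≤ smax := by
    rw [hs_law]; exact ae_iff.mpr (hs_bdd i)
  exact ((ae_map_iff (hs_meas i t).aemeasurable (.of_discrete)).mp hbdd).mono fun _ h => h.1

theorem ae_choice_singleton {U : ℕ → Ω → ℝ} {choice : Finset (Fin n) → ℝ → Fin n}
    (hU_meas : ∀ t, Measurable (U t)) (hchoice_meas : ∀ I, Measurable (choice I))
    (hU_law : ∀ t, Measure.map (U t) P = volume.restrict (Set.Icc (0:ℝ) 1))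
    (hchoice_unif : ∀ j, volume.restrict (Set.Icc (0:ℝ) 1) {u | choice {j} u = j} = 1) :
    ∀ᵐ ω ∂P, ∀ t j, choice {j} (U t ω) = j := by
  refine ae_all_iff.mpr fun t => ae_all_iff.mpr fun j => ?_
  have hmeas : MeasurableSet {u | choice {j} u = j} := hchoice_meas {j} (.singleton j)
  refine (ae_map_iff (hU_meas t).aemeasurable hmeas).mp ?_
  rw [hU_law, ae_iff_measure_eq hmeas.nullMeasurableSet, hchoice_unif,
    Measure.restrict_apply_univ, Real.volume_Icc, sub_zero, ENNReal.ofReal_one]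

theorem lintegral_sum_sq_traj_sampleTime_le [IsProbabilityMeasure P] (hn : 2 ≤ n)
    {choice : Finset (Fin n) → ℝ → Fin n} {a : ℕ → Ω → ℕ} {s : Fin n → ℕ → Ω → ℕ}
    {U : ℕ → Ω → ℝ} {α : State n}
    (hsvc : ∀ᵐ ω ∂P, ∀ t i, 1 ≤ s i t ω) (hchoice : ∀ᵐ ω ∂P, ∀ t j, choice {j} (U t ω) = j)
    (ha_meas : ∀ t, Measurable (a t)) {C : ℝ≥0∞}
    (ha_sq : ∀ t, ∫⁻ ω, (a t ω : ℝ≥0∞) ^ 2 ∂P ≤ C) {M : ℕ} (hM : 1 ≤ M) (hαM : ∀ i, α.1 i ≤ M) :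
    ∫⁻ ω, ∑ i, ((traj choice a s U α (sampleTime (traj choice a s U α) 0 ω) ω).1 i : ℝ≥0∞) ^ 2 ∂P
      ≤ 2 * n * (1 + C) * M ^ 2 := by
  have hpt : ∀ᵐ ω ∂P,
      ∑ i, ((traj choice a s U α (sampleTime (traj choice a s U α) 0 ω) ω).1 i : ℝ≥0∞) ^ 2
        ≤ 2 * n * (M ^ 2 + M * ∑ r ∈ Finset.range M, (a r ω : ℝ≥0∞) ^ 2) := by
    filter_upwards [hsvc, hchoice] with ω hs hc
    exact_mod_cast sum_sq_traj_sampleTime_le hn hs hc hM hαM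
  calc _ ≤ ∫⁻ ω, 2 * n * (M ^ 2 + M * ∑ r ∈ Finset.range M, (a r ω : ℝ≥0∞) ^ 2) ∂P :=
        lintegral_mono_ae hpt
    _ = 2 * n * (M ^ 2 + M * ∑ r ∈ Finset.range M, ∫⁻ ω, (a r ω : ℝ≥0∞) ^ 2 ∂P) := by
        rw [lintegral_const_mul _ (by fun_prop), lintegral_add_left measurable_const,
          lintegral_const, measure_univ, mul_one, lintegral_const_mul _ (by fun_prop),
          lintegral_finsetSum _ fun r _ => by fun_prop]
    _ ≤ 2 * n * (M ^ 2 + M * ∑ _r ∈ Finset.range M, C) := by gcongr with r; exact ha_sq r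
    _ = 2 * n * (1 + C) * M ^ 2 := by simp; ring

end Probabilistic

end PI

theorem pi_second_moment_at_first_sample_general
    {n : ℕ} (hn : 2 ≤ n) {Ω : Type} [MeasurableSpace Ω]
    -- `P α` is the law of the system driven by the noise below, started at `X 0 = α`
    (P : PI.State n → Measure Ω) (hP : ∀ α, IsProbabilityMeasure (P α))
    (a : ℕ → Ω → ℕ) (s : Fin n → ℕ → Ω → ℕ) (U : ℕ → Ω → ℝ)
    (choice : Finset (Fin n) → ℝ → Fin n)
    (νa : Measure ℕ) (νs : Fin n → Measure ℕ)
    (lam σa : ℝ) (smax : ℕ)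
    (ha_meas : ∀ t, Measurable (a t)) (hs_meas : ∀ i t, Measurable (s i t))
    (hU_meas : ∀ t, Measurable (U t)) (hchoice_meas : ∀ I, Measurable (choice I))
    -- the arrivals are i.i.d. with law `νa`, the services of server `i` i.i.d. with law `νs i`,
    -- the tie-breaking noise is uniform on `[0,1]`, and all are mutually independent,
    -- under every starting state
    (ha_law : ∀ α t, Measure.map (a t) (P α) = νa)
    (hs_law : ∀ α i t, Measure.map (s i t) (P α) = νs i)
    (hU_law : ∀ α t, Measure.map (U t) (P α) = volume.restrict (Set.Icc (0:ℝ) 1))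
    -- `P(a(1) = 0) > 0`, `E[a(1)] = λ`, `Var(a(1)) = σa² < ∞`
    (ha_var : ∫⁻ k, ((k : ℝ≥0∞)) ^ 2 ∂νa = ENNReal.ofReal (lam ^ 2 + σa ^ 2))
    -- `1 ≤ s i t ≤ smax` and `E[s i t] = μ i`
    (hs_bdd : ∀ i, (νs i) {k : ℕ | ¬(1 ≤ k ∧ k ≤ smax)} = 0)
    -- `choice I` applied to a uniform `[0,1]` variable is uniform on `I`
    (hchoice_unif : ∀ I : Finset (Fin n), I.Nonempty → ∀ i ∈ I,
      (volume.restrict (Set.Icc (0:ℝ) 1)) {u | choice I u = i} = (I.card : ℝ≥0∞)⁻¹)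
    :
    ∀ X : PI.State n → ℕ → Ω → PI.State n, X = PI.traj choice a s U →
    ∀ 𝒜 : Set (PI.State n),
      𝒜 = {β | ∃ i : Fin n, ∃ t : ℕ,
              P (PI.emptyState i) {ω | X (PI.emptyState i) t ω = β} ≠ 0} →
    (∃ B : ℝ, 0 < B ∧
      ∀ α ∈ 𝒜,
        ∫⁻ ω, ∑ i, ((X α (PI.sampleTime (X α) 0 ω) ω).1 i : ℝ≥0∞) ^ 2 ∂(P α)
          ≤ ENNReal.ofReal B * ((max (Finset.univ.sup α.1) 1 : ℕ) : ℝ≥0∞) ^ 2) ∧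
    (∀ γ : ℝ, 0 < γ → γ ≤ 1 → ∀ α ∈ 𝒜,
      ∫⁻ ω, PI.lyap γ (X α (PI.sampleTime (X α) 0 ω) ω) ∂(P α) ≠ ⊤) := by
  rintro X rfl 𝒜 -
  set c := lam ^ 2 + σa ^ 2
  have hn₀ : (0 : ℝ) < n := by exact_mod_cast (by omega : 0 < n)
  have hB : ENNReal.ofReal (2 * n * (1 + c)) = 2 * n * (1 + ENNReal.ofReal c) := by
    rw [ENNReal.ofReal_mul (by positivity), ENNReal.ofReal_add zero_le_one (by positivity),
      ENNReal.ofReal_mul zero_le_two, ENNReal.ofReal_ofNat, ENNReal.ofReal_natCast,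
      ENNReal.ofReal_one]
  have ha_sq : ∀ α t, ∫⁻ ω, (a t ω : ℝ≥0∞) ^ 2 ∂(P α) ≤ ENNReal.ofReal c := fun α t => by
    rw [← ha_var, ← ha_law α t, lintegral_map (by fun_prop) (ha_meas t)]
  have hsingleton : ∀ j, volume.restrict (Set.Icc (0:ℝ) 1) {u | choice {j} u = j} = 1 :=
    fun j => by
      simp [hchoice_unif {j} (Finset.singleton_nonempty j) j (Finset.mem_singleton_self j)]
  have key : ∀ α : PI.State n,
      ∫⁻ ω, ∑ i, ((PI.traj choice a s U α (PI.sampleTime (PI.traj choice a s U α) 0 ω) ω).1 i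
        : ℝ≥0∞) ^ 2 ∂(P α)
        ≤ ENNReal.ofReal (2 * n * (1 + c)) * ((max (Finset.univ.sup α.1) 1 : ℕ) : ℝ≥0∞) ^ 2 :=
    fun α => by
      have := hP α
      rw [hB]
      exact PI.lintegral_sum_sq_traj_sampleTime_le hn
        (PI.ae_one_le_service hs_meas (hs_law α) hs_bdd)
        (PI.ae_choice_singleton hU_meas hchoice_meas (hU_law α) hsingleton) ha_meas (ha_sq α)
        (le_max_right _ _) fun i => (Finset.le_sup (Finset.mem_univ i)).trans (le_max_left _ _)
  refine ⟨⟨2 * n * (1 + c), by positivity, fun α _ => key α⟩, fun γ hγ₀ hγ₁ α _ => ?_⟩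
  refine ne_top_of_le_ne_top ?_
    ((lintegral_mono fun ω => PI.lyap_le_sum_sq (by linarith) hγ₁ _).trans (key α))
  exact ENNReal.mul_ne_top ENNReal.ofReal_ne_top (by simp)

/-- **Second-moment bound on the queue lengths at the first sampling time** (eqs. (qmax
bound)–(finiteness of second term)).  There is a constant `B > 0` such that for every initial
state `α ∈ 𝒜`, `E_α [ ∑ i, Q_i(τ_0)² ] ≤ B (max (max_i α_i) 1)²`.  In particular
`E_α [L (X (τ_0))] = E_α [∑ i, Q_i(τ_0)^(1+γ)]` is finite for every `γ ∈ (0,1]`. -/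
theorem pi_second_moment_at_first_sample
    {n : ℕ} (hn : 2 ≤ n) {Ω : Type} [MeasurableSpace Ω]
    -- `P α` is the law of the system driven by the noise below, started at `X 0 = α`
    (P : PI.State n → Measure Ω) (hP : ∀ α, IsProbabilityMeasure (P α))
    (a : ℕ → Ω → ℕ) (s : Fin n → ℕ → Ω → ℕ) (U : ℕ → Ω → ℝ)
    (choice : Finset (Fin n) → ℝ → Fin n)
    (νa : Measure ℕ) (νs : Fin n → Measure ℕ)
    (lam σa : ℝ) (μ : Fin n → ℝ) (smax : ℕ)
    (ha_meas : ∀ t, Measurable (a t)) (hs_meas : ∀ i t, Measurable (s i t))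
    (hU_meas : ∀ t, Measurable (U t)) (hchoice_meas : ∀ I, Measurable (choice I))
    -- the arrivals are i.i.d. with law `νa`, the services of server `i` i.i.d. with law `νs i`,
    -- the tie-breaking noise is uniform on `[0,1]`, and all are mutually independent,
    -- under every starting state
    (ha_law : ∀ α t, Measure.map (a t) (P α) = νa)
    (hs_law : ∀ α i t, Measure.map (s i t) (P α) = νs i)
    (hU_law : ∀ α t, Measure.map (U t) (P α) = volume.restrict (Set.Icc (0:ℝ) 1))
    (hindep : ∀ α, iIndepFun (PI.noise a s U) (P α))
    -- `P(a(1) = 0) > 0`, `E[a(1)] = λ`, `Var(a(1)) = σa² < ∞`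
    (ha0 : νa {0} ≠ 0)
    (ha_mean : ∫⁻ k, (k : ℝ≥0∞) ∂νa = ENNReal.ofReal lam)
    (ha_var : ∫⁻ k, ((k : ℝ≥0∞)) ^ 2 ∂νa = ENNReal.ofReal (lam ^ 2 + σa ^ 2))
    -- `1 ≤ s i t ≤ smax` and `E[s i t] = μ i`
    (hs_bdd : ∀ i, (νs i) {k : ℕ | ¬(1 ≤ k ∧ k ≤ smax)} = 0)
    (hs_mean : ∀ i, ∫⁻ k, (k : ℝ≥0∞) ∂(νs i) = ENNReal.ofReal (μ i))
    -- `choice I` applied to a uniform `[0,1]` variable is uniform on `I`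
    (hchoice_unif : ∀ I : Finset (Fin n), I.Nonempty → ∀ i ∈ I,
      (volume.restrict (Set.Icc (0:ℝ) 1)) {u | choice I u = i} = (I.card : ℝ≥0∞)⁻¹)
    :
    ∀ X : PI.State n → ℕ → Ω → PI.State n, X = PI.traj choice a s U →
    ∀ 𝒜 : Set (PI.State n),
      𝒜 = {β | ∃ i : Fin n, ∃ t : ℕ,
              P (PI.emptyState i) {ω | X (PI.emptyState i) t ω = β} ≠ 0} →
    (∃ B : ℝ, 0 < B ∧
      ∀ α ∈ 𝒜,
        ∫⁻ ω, ∑ i, ((X α (PI.sampleTime (X α) 0 ω) ω).1 i : ℝ≥0∞) ^ 2 ∂(P α)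
          ≤ ENNReal.ofReal B * ((max (Finset.univ.sup α.1) 1 : ℕ) : ℝ≥0∞) ^ 2) ∧
    (∀ γ : ℝ, 0 < γ → γ ≤ 1 → ∀ α ∈ 𝒜,
      ∫⁻ ω, PI.lyap γ (X α (PI.sampleTime (X α) 0 ω) ω) ∂(P α) ≠ ⊤) :=
  pi_second_moment_at_first_sample_general hn P hP a s U choice νa νs lam σa smax ha_meas hs_meas
    hU_meas hchoice_meas ha_law hs_law hU_law ha_var hs_bdd hchoice_unif
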